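/- arXiv:2512.20465 — 2 statements merged into one kernel-verified Lean document; each statement's English description precedes it below -/
import Mathlib

section
/- Let H be a Hopf algebra over k and A a right H-Galois object (an H-Galois extension of B = k) which is faithfully flat as a k-module. For any algebra C and any normal twisting map ψ: A⊗C → C⊗A which is a right H-comodule morphism, the twisted tensor product algebra C⊗^ψA is a right H-comodule algebra with coaction id_C⊗δ whose coinvariant subalgebra is C⊗1_A ≅ C, and C ⊆ C⊗^ψA is a faithfully flat H-Galois extension. -/
open TensorProduct LinearMap Function

noncomputable section
namespace Paper

variable (k : Type*) [Field k]
section Twist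
variable (A : Type*) [Ring A] [Algebra k A] (C : Type*) [Ring C] [Algebra k C]

/-- The twisted multiplication `m^ψ := (m_C ⊗ m_A) ∘ (id_C ⊗ ψ ⊗ id_A)` as a linear map
`(C ⊗ A) ⊗ (C ⊗ A) → C ⊗ A`. -/
def tmulMap (ψ : A ⊗[k] C →ₗ[k] C ⊗[k] A) :
    (C ⊗[k] A) ⊗[k] (C ⊗[k] A) →ₗ[k] C ⊗[k] A :=
  TensorProduct.map (LinearMap.mul' k C) (LinearMap.mul' k A)
    ∘ₗ (TensorProduct.assoc k (C ⊗[k] C) A A).toLinearMap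
    ∘ₗ TensorProduct.map (TensorProduct.assoc k C C A).symm.toLinearMap LinearMap.id
    ∘ₗ TensorProduct.map (LinearMap.lTensor C ψ) LinearMap.id
    ∘ₗ TensorProduct.map (TensorProduct.assoc k C A C).toLinearMap LinearMap.id
    ∘ₗ (TensorProduct.assoc k (C ⊗[k] A) C A).symm.toLinearMap

/-- The twisted product of two elements of `C ⊗ A`. -/
def tmul (ψ : A ⊗[k] C →ₗ[k] C ⊗[k] A) (x y : C ⊗[k] A) : C ⊗[k] A :=
  tmulMap k A C ψ (x ⊗ₜ y)

/-- `ψ` is a twisting map when the product `m^ψ` is associative. -/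
def IsTwistingMap (ψ : A ⊗[k] C →ₗ[k] C ⊗[k] A) : Prop :=
  ∀ x y z : C ⊗[k] A,
    tmul k A C ψ (tmul k A C ψ x y) z = tmul k A C ψ x (tmul k A C ψ y z)

/-- `ψ (a ⊗ 1_C) = 1_C ⊗ a`. -/
def LeftNormal (ψ : A ⊗[k] C →ₗ[k] C ⊗[k] A) : Prop :=
  ∀ a : A, ψ (a ⊗ₜ (1 : C)) = (1 : C) ⊗ₜ a

/-- `ψ (1_A ⊗ c) = c ⊗ 1_A`. -/
def RightNormal (ψ : A ⊗[k] C →ₗ[k] C ⊗[k] A) : Prop :=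
  ∀ c : C, ψ ((1 : A) ⊗ₜ c) = c ⊗ₜ (1 : A)

/-- Distributive law (C1): `ψ ∘ (m_A ⊗ id_C) = (id_C ⊗ m_A) ∘ (ψ ⊗ id_A) ∘ (id_A ⊗ ψ)`. -/
def DistLawC1 (ψ : A ⊗[k] C →ₗ[k] C ⊗[k] A) : Prop :=
  ψ ∘ₗ rTensor C (LinearMap.mul' k A)
    = lTensor C (LinearMap.mul' k A)
        ∘ₗ (TensorProduct.assoc k C A A).toLinearMap
        ∘ₗ rTensor A ψ
        ∘ₗ (TensorProduct.assoc k A C A).symm.toLinearMap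
        ∘ₗ lTensor A ψ
        ∘ₗ (TensorProduct.assoc k A A C).toLinearMap

/-- Distributive law (C2): `ψ ∘ (id_A ⊗ m_C) = (m_C ⊗ id_A) ∘ (id_C ⊗ ψ) ∘ (ψ ⊗ id_C)`. -/
def DistLawC2 (ψ : A ⊗[k] C →ₗ[k] C ⊗[k] A) : Prop :=
  ψ ∘ₗ lTensor A (LinearMap.mul' k C)
    = rTensor A (LinearMap.mul' k C)
        ∘ₗ (TensorProduct.assoc k C C A).symm.toLinearMap
        ∘ₗ lTensor C ψ
        ∘ₗ (TensorProduct.assoc k C A C).toLinearMap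
        ∘ₗ rTensor C ψ
        ∘ₗ (TensorProduct.assoc k A C C).symm.toLinearMap

/-- The left-hand side of the associativity condition (Oeq):
`(id_C ⊗ m_A) ∘ (ψ ⊗ id_A) ∘ (id_A ⊗ m_C ⊗ id_A) ∘ (id_A ⊗ id_C ⊗ ψ)`. -/
def OeqLHS (ψ : A ⊗[k] C →ₗ[k] C ⊗[k] A) :
    (A ⊗[k] C) ⊗[k] (A ⊗[k] C) →ₗ[k] C ⊗[k] A :=
  lTensor C (LinearMap.mul' k A)
    ∘ₗ (TensorProduct.assoc k C A A).toLinearMap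
    ∘ₗ rTensor A ψ
    ∘ₗ TensorProduct.map (lTensor A (LinearMap.mul' k C)) LinearMap.id
    ∘ₗ TensorProduct.map (TensorProduct.assoc k A C C).toLinearMap LinearMap.id
    ∘ₗ (TensorProduct.assoc k (A ⊗[k] C) C A).symm.toLinearMap
    ∘ₗ lTensor (A ⊗[k] C) ψ

/-- The right-hand side of the associativity condition (Oeq):
`(m_C ⊗ id_A) ∘ (id_C ⊗ ψ) ∘ (id_C ⊗ m_A ⊗ id_C) ∘ (ψ ⊗ id_A ⊗ id_C)`. -/
def OeqRHS (ψ : A ⊗[k] C →ₗ[k] C ⊗[k] A) :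
    (A ⊗[k] C) ⊗[k] (A ⊗[k] C) →ₗ[k] C ⊗[k] A :=
  rTensor A (LinearMap.mul' k C)
    ∘ₗ (TensorProduct.assoc k C C A).symm.toLinearMap
    ∘ₗ lTensor C ψ
    ∘ₗ (TensorProduct.assoc k C A C).toLinearMap
    ∘ₗ TensorProduct.map (lTensor C (LinearMap.mul' k A)) LinearMap.id
    ∘ₗ TensorProduct.map (TensorProduct.assoc k C A A).toLinearMap LinearMap.id
    ∘ₗ (TensorProduct.assoc k (C ⊗[k] A) A C).symm.toLinearMap
    ∘ₗ rTensor (A ⊗[k] C) ψ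

/-- The set of relations `c ⊗ (b·a) - (c·F(b)) ⊗ a` defining the push-forward `C ⊗_B A`. -/
def relSet (B : Subalgebra k A) (F : B →ₐ[k] C) : Set (C ⊗[k] A) :=
  {x | ∃ (c : C) (b : B) (a : A), x = c ⊗ₜ ((b : A) * a) - (c * F b) ⊗ₜ a}

/-- The subspace spanned by the relations defining the push-forward `C ⊗_B A`. -/
def relSpan (B : Subalgebra k A) (F : B →ₐ[k] C) : Submodule k (C ⊗[k] A) :=
  Submodule.span k (relSet k A C B F)

end Twist
section Star
variable [StarRing k] [TrivialStar k]
variable (X : Type*) [Ring X] [Algebra k X] [StarRing X] [StarModule k X]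
variable (Y : Type*) [Ring Y] [Algebra k Y] [StarRing Y] [StarModule k Y]

/-- The map `(∗_Y ⊗ ∗_X) ∘ flip : X ⊗ Y → Y ⊗ X`, `x ⊗ y ↦ y* ⊗ x*`. -/
def starFlip : X ⊗[k] Y →ₗ[k] Y ⊗[k] X :=
  TensorProduct.lift (LinearMap.mk₂ k (fun x y => (star y : Y) ⊗ₜ[k] (star x : X))
    (fun x x' y => by simp [star_add, TensorProduct.tmul_add])
    (fun r x y => by simp [star_smul, star_trivial, TensorProduct.tmul_smul])
    (fun x y y' => by simp [star_add, TensorProduct.add_tmul])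
    (fun r x y => by simp [star_smul, star_trivial, TensorProduct.smul_tmul']))

@[simp] lemma starFlip_tmul (x : X) (y : Y) :
    starFlip k X Y (x ⊗ₜ y) = (star y : Y) ⊗ₜ (star x : X) := rfl

end Star
section Flat
variable (R : Type*) [Ring R] (M : Type*) [AddCommGroup M] [Module R M]

/-- Flatness of a left module over a (possibly noncommutative) ring, via the equational
criterion: every linear relation among elements of `M` is a consequence of linear relations
holding in `R`. -/
def IsFlatLeft : Prop :=
  ∀ (n : ℕ) (r : Fin n → R) (x : Fin n → M), (∑ i, r i • x i) = 0 →
    ∃ (m : ℕ) (a : Fin n → Fin m → R) (y : Fin m → M),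
      (∀ i, x i = ∑ j, a i j • y j) ∧ ∀ j, (∑ i, r i * a i j) = 0

/-- Faithful flatness of a left module over a (possibly noncommutative) ring: flatness
together with `I·M ≠ M` for every maximal right ideal `I` of `R`. -/
def IsFaithfullyFlatLeft : Prop :=
  IsFlatLeft R M ∧ ∀ I : Submodule Rᵐᵒᵖ R, IsCoatom I →
    AddSubgroup.closure {z : M | ∃ i ∈ I, ∃ v : M, z = i • v} ≠ ⊤

end Flat
section Hopf
variable (A : Type*) [Ring A] [Algebra k A] (C : Type*) [Ring C] [Algebra k C]
variable (H : Type*) [Ring H] [HopfAlgebra k H]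

/-- `δ : A → A ⊗ H` makes `A` a right `H`-comodule algebra: `δ` is an algebra map (built in)
which is coassociative and counital. -/
def IsComodAlg (δ : A →ₐ[k] A ⊗[k] H) : Prop :=
  ((TensorProduct.assoc k A H H).toLinearMap ∘ₗ rTensor H δ.toLinearMap ∘ₗ δ.toLinearMap
      = lTensor A (Coalgebra.comul (R := k) (A := H)) ∘ₗ δ.toLinearMap)
    ∧ ((TensorProduct.rid k A).toLinearMap
        ∘ₗ lTensor A (Coalgebra.counit (R := k) (A := H)) ∘ₗ δ.toLinearMap
      = LinearMap.id)

/-- The subalgebra `A^{co H}` of coinvariant elements of a comodule algebra. -/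
def coinv (δ : A →ₐ[k] A ⊗[k] H) : Subalgebra k A where
  carrier := {a | δ a = a ⊗ₜ[k] (1 : H)}
  mul_mem' := by
    intro a b ha hb
    simp only [Set.mem_setOf_eq] at *
    rw [map_mul, ha, hb, Algebra.TensorProduct.tmul_mul_tmul, one_mul]
  one_mem' := by
    simp only [Set.mem_setOf_eq, map_one, Algebra.TensorProduct.one_def]
  add_mem' := by
    intro a b ha hb
    simp only [Set.mem_setOf_eq] at *
    rw [map_add, ha, hb, TensorProduct.add_tmul]
  algebraMap_mem' := by
    intro r
    simp only [Set.mem_setOf_eq, AlgHom.commutes, Algebra.TensorProduct.algebraMap_apply]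

/-- The canonical map `A ⊗ A → A ⊗ H`, `a ⊗ a' ↦ a a'₍₀₎ ⊗ a'₍₁₎` (before taking the
quotient `A ⊗_B A`). -/
def chi0 (δ : A →ₐ[k] A ⊗[k] H) : A ⊗[k] A →ₗ[k] A ⊗[k] H :=
  rTensor H (LinearMap.mul' k A)
    ∘ₗ (TensorProduct.assoc k A A H).symm.toLinearMap
    ∘ₗ lTensor A δ.toLinearMap

/-- The coaction `id_C ⊗ δ` on `C ⊗ A` (with `C` a trivial comodule), as a map
`C ⊗ A → (C ⊗ A) ⊗ H`. -/
def coactT (δ : A →ₐ[k] A ⊗[k] H) : C ⊗[k] A →ₗ[k] (C ⊗[k] A) ⊗[k] H :=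
  (TensorProduct.assoc k C A H).symm.toLinearMap ∘ₗ lTensor C δ.toLinearMap

/-- `ψ : A ⊗ C → C ⊗ A` is a morphism of right `H`-comodules:
`(id_C ⊗ δ) ∘ ψ = (ψ ⊗ id_H) ∘ (id_A ⊗ flip) ∘ (δ ⊗ id_C)`. -/
def IsComodMor (δ : A →ₐ[k] A ⊗[k] H) (ψ : A ⊗[k] C →ₗ[k] C ⊗[k] A) : Prop :=
  lTensor C δ.toLinearMap ∘ₗ ψ
    = (TensorProduct.assoc k C A H).toLinearMap
        ∘ₗ rTensor H ψ
        ∘ₗ (TensorProduct.assoc k A C H).symm.toLinearMap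
        ∘ₗ lTensor A (TensorProduct.comm k H C).toLinearMap
        ∘ₗ (TensorProduct.assoc k A H C).toLinearMap
        ∘ₗ rTensor C δ.toLinearMap

variable {k H} in
/-- Given a multiplication `m` on `P`, the induced multiplication on `P ⊗ H`. -/
def tmulH {P : Type*} [AddCommGroup P] [Module k P] (m : P →ₗ[k] P →ₗ[k] P) :
    P ⊗[k] H →ₗ[k] P ⊗[k] H →ₗ[k] P ⊗[k] H :=
  TensorProduct.map₂ m (LinearMap.mul k H)

variable {k H} in
/-- The canonical Galois map `P ⊗ P → P ⊗ H`, `x ⊗ y ↦ (x ·_m y₍₀₎) ⊗ y₍₁₎`, for a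
multiplication `m` and a coaction `db` on `P`. -/
def chiP {P : Type*} [AddCommGroup P] [Module k P]
    (m : P →ₗ[k] P →ₗ[k] P) (db : P →ₗ[k] P ⊗[k] H) : P ⊗[k] P →ₗ[k] P ⊗[k] H :=
  rTensor H (TensorProduct.lift m)
    ∘ₗ (TensorProduct.assoc k P P H).symm.toLinearMap
    ∘ₗ lTensor P db

variable {k C} in
/-- The span of the relations `(x ·_m e c) ⊗ y - x ⊗ (e c ·_m y)` defining the balanced tensor
product `P ⊗_C P` over the image of `C` in `P`. -/
def balSpan {P : Type*} [AddCommGroup P] [Module k P]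
    (m : P →ₗ[k] P →ₗ[k] P) (e : C → P) : Submodule k (P ⊗[k] P) :=
  Submodule.span k {z | ∃ (x y : P) (c : C), z = (m x (e c)) ⊗ₜ y - x ⊗ₜ (m (e c) y)}

variable {k H} in
/-- Coassociativity of a coaction `db : P → P ⊗ H`. -/
def Coassoc {P : Type*} [AddCommGroup P] [Module k P] (db : P →ₗ[k] P ⊗[k] H) : Prop :=
  (TensorProduct.assoc k P H H).toLinearMap ∘ₗ rTensor H db ∘ₗ db
    = lTensor P (Coalgebra.comul (R := k) (A := H)) ∘ₗ db

variable {k H} in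
/-- Counitality of a coaction `db : P → P ⊗ H`. -/
def Counital {P : Type*} [AddCommGroup P] [Module k P] (db : P →ₗ[k] P ⊗[k] H) : Prop :=
  (TensorProduct.rid k P).toLinearMap
      ∘ₗ lTensor P (Coalgebra.counit (R := k) (A := H)) ∘ₗ db
    = LinearMap.id

variable {k H} in
/-- Convolution product of two linear maps `H → P`, with respect to a multiplication `m`
on `P`. -/
def convP {P : Type*} [AddCommGroup P] [Module k P]
    (m : P →ₗ[k] P →ₗ[k] P) (f g : H →ₗ[k] P) : H →ₗ[k] P :=
  TensorProduct.lift m ∘ₗ TensorProduct.map f g ∘ₗ Coalgebra.comul (R := k) (A := H)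

variable {k H} in
/-- The unit for convolution: `h ↦ ε(h) • u`. -/
def convUnit {P : Type*} [AddCommGroup P] [Module k P] (u : P) : H →ₗ[k] P :=
  (Coalgebra.counit (R := k) (A := H)).smulRight u

end Hopf

section HopfPush
variable (A : Type*) [Ring A] [Algebra k A] (C : Type*) [Ring C] [Algebra k C]
variable (H : Type*) [Ring H] [HopfAlgebra k H]
section PushForward
variable (δ : A →ₐ[k] A ⊗[k] H) (F : coinv k A H δ →ₐ[k] C)

/-- The subspace of `C ⊗ A` defining the push-forward `C ⊗_B A`, `B = A^{co H}`. -/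
def pushSpan : Submodule k (C ⊗[k] A) := relSpan k A C (coinv k A H δ) F

/-- The quotient map `C ⊗ A → C ⊗_B A`. -/
def pushQ : C ⊗[k] A →ₗ[k] (C ⊗[k] A) ⧸ pushSpan k A C H δ F :=
  (pushSpan k A C H δ F).mkQ

/-- `\barψ = π_B ∘ ψ` is a `B`-bimodule morphism. -/
def BarBimod (ψ : A ⊗[k] C →ₗ[k] C ⊗[k] A) : Prop :=
  (∀ (b : coinv k A H δ) (a : A) (c : C),
      pushQ k A C H δ F (ψ (((b : A) * a) ⊗ₜ c))
        = pushQ k A C H δ F (rTensor A (LinearMap.mulLeft k (F b)) (ψ (a ⊗ₜ c))))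
  ∧ (∀ (b : coinv k A H δ) (a : A) (c : C),
      pushQ k A C H δ F (ψ (a ⊗ₜ (c * F b)))
        = pushQ k A C H δ F (lTensor C (LinearMap.mulRight k (b : A)) (ψ (a ⊗ₜ c))))

/-- `\barψ (1_A ⊗ c) = c ⊗_B 1_A` and `\barψ (a ⊗ 1_C) = 1_C ⊗_B a`. -/
def BarNormal (ψ : A ⊗[k] C →ₗ[k] C ⊗[k] A) : Prop :=
  (∀ c : C, pushQ k A C H δ F (ψ ((1 : A) ⊗ₜ c)) = pushQ k A C H δ F (c ⊗ₜ (1 : A)))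
  ∧ (∀ a : A, pushQ k A C H δ F (ψ (a ⊗ₜ (1 : C))) = pushQ k A C H δ F ((1 : C) ⊗ₜ a))

/-- `σ` is the canonical left `C`-action on the push-forward `C ⊗_B A`:
`σ c (c' ⊗_B a) = (c c') ⊗_B a`. -/
def SigmaSpec (σ : C →ₗ[k] ((C ⊗[k] A) ⧸ pushSpan k A C H δ F)
    →ₗ[k] ((C ⊗[k] A) ⧸ pushSpan k A C H δ F)) : Prop :=
  ∀ (c : C) (x : C ⊗[k] A),
    σ c (pushQ k A C H δ F x) = pushQ k A C H δ F (rTensor A (LinearMap.mulLeft k c) x)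

/-- The distributive law `\barψ (a ⊗ c c') = c^ψ · \barψ (a^ψ ⊗ c')`, where `·` denotes the
left `C`-action `σ` on the push-forward. -/
def BarDistrib (ψ : A ⊗[k] C →ₗ[k] C ⊗[k] A)
    (σ : C →ₗ[k] ((C ⊗[k] A) ⧸ pushSpan k A C H δ F)
      →ₗ[k] ((C ⊗[k] A) ⧸ pushSpan k A C H δ F)) : Prop :=
  (pushQ k A C H δ F ∘ₗ ψ) ∘ₗ lTensor A (LinearMap.mul' k C)
    = TensorProduct.lift σ
        ∘ₗ lTensor C (pushQ k A C H δ F ∘ₗ ψ)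
        ∘ₗ (TensorProduct.assoc k C A C).toLinearMap
        ∘ₗ rTensor C ψ
        ∘ₗ (TensorProduct.assoc k A C C).symm.toLinearMap

/-- The embedding `C → C ⊗_B A`, `c ↦ c ⊗_B 1_A`. -/
def eC : C → (C ⊗[k] A) ⧸ pushSpan k A C H δ F :=
  fun c => pushQ k A C H δ F (c ⊗ₜ (1 : A))

end PushForward

section Galois
variable (δ : A →ₐ[k] A ⊗[k] H)

/-- The subspace of `A ⊗ A` defining the balanced tensor product `A ⊗_B A`, `B = A^{co H}`. -/
def galSpan : Submodule k (A ⊗[k] A) :=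
  relSpan k A A (coinv k A H δ) (coinv k A H δ).val

/-- The quotient map `A ⊗ A → A ⊗_B A`. -/
def galQ : A ⊗[k] A →ₗ[k] (A ⊗[k] A) ⧸ galSpan k A H δ := (galSpan k A H δ).mkQ

/-- The translation map `τ = χ⁻¹(1_A ⊗ -) : H → A ⊗_B A` obtained from a bijective
canonical map `χ`. -/
def transMap (χ : ((A ⊗[k] A) ⧸ galSpan k A H δ) ≃ₗ[k] A ⊗[k] H) :
    H →ₗ[k] (A ⊗[k] A) ⧸ galSpan k A H δ :=
  χ.symm.toLinearMap ∘ₗ TensorProduct.mk k A H 1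

end Galois
end HopfPush
end Paper

namespace Paper
set_option synthInstance.maxHeartbeats 1000000
set_option maxHeartbeats 2000000
section Lemmas
variable (k : Type*) [Field k]
variable (A : Type*) [Ring A] [Algebra k A] (C : Type*) [Ring C] [Algebra k C]
variable (H : Type*) [Ring H] [HopfAlgebra k H]

lemma tmulMap_tmul (ψ : A ⊗[k] C →ₗ[k] C ⊗[k] A) (c c' : C) (a a' : A) :
    tmulMap k A C ψ ((c ⊗ₜ a) ⊗ₜ (c' ⊗ₜ a'))
      = TensorProduct.map (LinearMap.mulLeft k c) (LinearMap.mulRight k a') (ψ (a ⊗ₜ c')) := by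
  simp only [tmulMap, LinearMap.comp_apply, LinearEquiv.coe_coe, TensorProduct.assoc_symm_tmul,
    TensorProduct.map_tmul, TensorProduct.assoc_tmul, LinearMap.id_coe, id_eq,
    LinearMap.lTensor_tmul]
  generalize ψ (a ⊗ₜ c') = w
  induction w using TensorProduct.induction_on with
  | zero => simp
  | tmul u v => simp [LinearMap.mul'_apply, LinearMap.mulLeft_apply, LinearMap.mulRight_apply]
  | add u v hu hv =>
      rw [TensorProduct.tmul_add, map_add, TensorProduct.add_tmul, map_add, map_add, map_add,
        hu, hv]

lemma coactT_tmul (δ : A →ₐ[k] A ⊗[k] H) (c : C) (a : A) :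
    coactT k A C H δ (c ⊗ₜ a) = (TensorProduct.assoc k C A H).symm (c ⊗ₜ δ a) := by
  simp [coactT]

lemma coactT_mulmap (δ : A →ₐ[k] A ⊗[k] H) (c : C) (a' : A) (z : C ⊗[k] A) :
    coactT k A C H δ (TensorProduct.map (LinearMap.mulLeft k c) (LinearMap.mulRight k a') z)
      = (TensorProduct.assoc k C A H).symm
          (TensorProduct.map (LinearMap.mulLeft k c) (LinearMap.mulRight k (δ a'))
            (LinearMap.lTensor C δ.toLinearMap z)) := by
  induction z using TensorProduct.induction_on with
  | zero => simp
  | tmul u v =>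
      simp only [TensorProduct.map_tmul, LinearMap.mulLeft_apply, LinearMap.mulRight_apply,
        coactT_tmul, LinearMap.lTensor_tmul, AlgHom.toLinearMap_apply, map_mul]
  | add u v hu hv => rw [map_add, map_add, hu, hv, map_add, map_add, map_add]

end Lemmas
end Paper
namespace Paper
section Lemmas2
set_option synthInstance.maxHeartbeats 1000000
set_option maxHeartbeats 4000000
variable (k : Type*) [Field k]
variable (A : Type*) [Ring A] [Algebra k A] (C : Type*) [Ring C] [Algebra k C]
variable (H : Type*) [Ring H] [HopfAlgebra k H]

lemma tmul_add_left (ψ : A ⊗[k] C →ₗ[k] C ⊗[k] A) (x x' y : C ⊗[k] A) :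
    tmul k A C ψ (x + x') y = tmul k A C ψ x y + tmul k A C ψ x' y := by
  simp [tmul, TensorProduct.add_tmul]

lemma tmul_add_right (ψ : A ⊗[k] C →ₗ[k] C ⊗[k] A) (x y y' : C ⊗[k] A) :
    tmul k A C ψ x (y + y') = tmul k A C ψ x y + tmul k A C ψ x y' := by
  simp [tmul, TensorProduct.tmul_add]

lemma part_a (δ : A →ₐ[k] A ⊗[k] H) (ψ : A ⊗[k] C →ₗ[k] C ⊗[k] A)
    (hcomod : IsComodMor k A C H δ ψ) (x y : C ⊗[k] A) :
    coactT k A C H δ (tmul k A C ψ x y)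
      = tmulH (TensorProduct.curry (tmulMap k A C ψ))
          (coactT k A C H δ x) (coactT k A C H δ y) := by
  induction x using TensorProduct.induction_on with
  | zero => simp [tmul, tmulH, TensorProduct.zero_tmul]
  | add x x' hx hx' =>
      rw [tmul_add_left, map_add, hx, hx', map_add, map_add, LinearMap.add_apply]
  | tmul c a =>
    induction y using TensorProduct.induction_on with
    | zero => simp [tmul, tmulH, TensorProduct.tmul_zero]
    | add y y' hy hy' =>
        rw [tmul_add_right, map_add, hy, hy', map_add, map_add]
    | tmul c' a' =>
      rw [tmul, tmulMap_tmul, coactT_mulmap]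
      have hc := LinearMap.congr_fun hcomod (a ⊗ₜ[k] c')
      simp only [LinearMap.comp_apply, LinearEquiv.coe_coe, LinearMap.rTensor_tmul,
        AlgHom.toLinearMap_apply] at hc
      rw [hc, coactT_tmul, coactT_tmul]
      generalize δ a = t
      generalize δ a' = t'
      induction t' using TensorProduct.induction_on with
      | zero =>
          have hz : LinearMap.mulRight k (0 : A ⊗[k] H) = 0 := by ext u; simp
          simp [hz, tmulH]
      | add u v hu hv =>
          have hadd : LinearMap.mulRight k (u + v)
              = LinearMap.mulRight k u + LinearMap.mulRight k v := by
            ext w; simp [mul_add]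
          rw [hadd, TensorProduct.map_add_right, LinearMap.add_apply, map_add, hu, hv,
            TensorProduct.tmul_add, map_add, map_add]
      | tmul a'0 a'1 =>
        induction t using TensorProduct.induction_on with
        | zero => simp [tmulH]
        | add u v hu hv =>
            simp only [TensorProduct.add_tmul, TensorProduct.tmul_add, map_add,
              LinearMap.add_apply, hu, hv]
        | tmul a0 a1 =>
          simp only [LinearEquiv.coe_coe, TensorProduct.assoc_tmul,
            TensorProduct.assoc_symm_tmul, LinearMap.lTensor_tmul, LinearMap.rTensor_tmul,
            TensorProduct.comm_tmul, tmulH, TensorProduct.map₂_apply_tmul,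
            TensorProduct.map_tmul, TensorProduct.curry_apply, tmulMap_tmul,
            LinearMap.mul_apply']
          generalize ψ (a0 ⊗ₜ c') = w
          induction w using TensorProduct.induction_on with
          | zero => simp
          | tmul u v =>
              simp [LinearMap.mulLeft_apply, LinearMap.mulRight_apply,
                Algebra.TensorProduct.tmul_mul_tmul]
          | add u v hu hv =>
              simp only [TensorProduct.add_tmul, TensorProduct.tmul_add, map_add, hu, hv]

end Lemmas2
end Paper
namespace Paper
section Lemmas3
set_option synthInstance.maxHeartbeats 1000000
set_option maxHeartbeats 4000000
variable (k : Type*) [Field k]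
variable (A : Type*) [Ring A] [Algebra k A] (C : Type*) [Ring C] [Algebra k C]
variable (H : Type*) [Ring H] [HopfAlgebra k H]

lemma part_b (δ : A →ₐ[k] A ⊗[k] H) :
    coactT k A C H δ ((1 : C) ⊗ₜ (1 : A)) = ((1 : C) ⊗ₜ (1 : A)) ⊗ₜ (1 : H) := by
  rw [coactT_tmul, map_one, Algebra.TensorProduct.one_def]
  simp

lemma part_c (δ : A →ₐ[k] A ⊗[k] H) (hδ : IsComodAlg k A H δ) :
    Coassoc (H := H) (coactT k A C H δ) := by
  apply TensorProduct.ext'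
  intro c a
  have h1 := LinearMap.congr_fun hδ.1 a
  simp only [LinearMap.comp_apply, LinearEquiv.coe_coe, AlgHom.toLinearMap_apply] at h1
  -- both sides are the image of the two sides of h1 under `u ↦ assoc⁻¹ (c ⊗ u)`
  have key1 : ∀ t : A ⊗[k] H,
      (TensorProduct.assoc k (C ⊗[k] A) H H)
          (LinearMap.rTensor H (coactT k A C H δ)
            ((TensorProduct.assoc k C A H).symm (c ⊗ₜ t)))
        = (TensorProduct.assoc k C A (H ⊗[k] H)).symm
            (c ⊗ₜ ((TensorProduct.assoc k A H H)
              (LinearMap.rTensor H δ.toLinearMap t))) := by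
    intro t
    induction t using TensorProduct.induction_on with
    | zero => simp
    | add u v hu hv => simp only [TensorProduct.tmul_add, map_add, hu, hv]
    | tmul u h =>
        simp only [LinearEquiv.coe_coe, TensorProduct.assoc_symm_tmul, LinearMap.rTensor_tmul,
          AlgHom.toLinearMap_apply, coactT_tmul]
        generalize δ u = s
        induction s using TensorProduct.induction_on with
        | zero => simp
        | add u' v' hu' hv' =>
            simp only [TensorProduct.tmul_add, TensorProduct.add_tmul, map_add, hu', hv']
        | tmul u0 u1 => simp
  have key2 : ∀ t : A ⊗[k] H,
      LinearMap.lTensor (C ⊗[k] A) (Coalgebra.comul (R := k) (A := H))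
          ((TensorProduct.assoc k C A H).symm (c ⊗ₜ t))
        = (TensorProduct.assoc k C A (H ⊗[k] H)).symm
            (c ⊗ₜ (LinearMap.lTensor A (Coalgebra.comul (R := k) (A := H)) t)) := by
    intro t
    induction t using TensorProduct.induction_on with
    | zero => simp
    | add u v hu hv => simp only [TensorProduct.tmul_add, map_add, hu, hv]
    | tmul u h => simp
  simp only [LinearMap.comp_apply, LinearEquiv.coe_coe, coactT_tmul]
  rw [key1, key2, h1]

lemma part_d (δ : A →ₐ[k] A ⊗[k] H) (hδ : IsComodAlg k A H δ) :
    Counital (H := H) (coactT k A C H δ) := by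
  apply TensorProduct.ext'
  intro c a
  have h2 := LinearMap.congr_fun hδ.2 a
  simp only [LinearMap.comp_apply, LinearEquiv.coe_coe, AlgHom.toLinearMap_apply,
    LinearMap.id_coe, id_eq] at h2
  have key : ∀ t : A ⊗[k] H,
      (TensorProduct.rid k (C ⊗[k] A))
          (LinearMap.lTensor (C ⊗[k] A) (Coalgebra.counit (R := k) (A := H))
            ((TensorProduct.assoc k C A H).symm (c ⊗ₜ t)))
        = c ⊗ₜ ((TensorProduct.rid k A)
            (LinearMap.lTensor A (Coalgebra.counit (R := k) (A := H)) t)) := by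
    intro t
    induction t using TensorProduct.induction_on with
    | zero => simp
    | add u v hu hv => simp only [TensorProduct.tmul_add, map_add, hu, hv]
    | tmul u h => simp [TensorProduct.tmul_smul, TensorProduct.smul_tmul']
  simp only [LinearMap.comp_apply, LinearEquiv.coe_coe, coactT_tmul, LinearMap.id_coe, id_eq]
  rw [key, h2]

lemma part_coinv (δ : A →ₐ[k] A ⊗[k] H) (hco : coinv k A H δ = ⊥) :
    {x : C ⊗[k] A | coactT k A C H δ x = x ⊗ₜ (1 : H)}
      = Set.range (fun c : C => c ⊗ₜ (1 : A)) := by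
  ext x
  simp only [Set.mem_setOf_eq, Set.mem_range]
  constructor
  · intro hx
    set g : A →ₗ[k] A ⊗[k] H := δ.toLinearMap - ((TensorProduct.mk k A H).flip 1) with hg
    have claim : ∀ y : C ⊗[k] A,
        (TensorProduct.assoc k C A H).symm (LinearMap.lTensor C g y)
          = coactT k A C H δ y - y ⊗ₜ (1 : H) := by
      intro y
      induction y using TensorProduct.induction_on with
      | zero => simp
      | add u v hu hv =>
          simp only [map_add, hu, hv, TensorProduct.add_tmul]
          abel
      | tmul u v =>
          simp only [hg, LinearMap.lTensor_tmul, LinearMap.sub_apply, AlgHom.toLinearMap_apply,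
            TensorProduct.mk_apply, LinearMap.flip_apply, TensorProduct.tmul_sub, map_sub,
            coactT_tmul]
          simp
    have hker : LinearMap.lTensor C g x = 0 := by
      have := claim x
      rw [hx, sub_self] at this
      exact (LinearEquiv.map_eq_zero_iff _).mp this
    have hexact : Function.Exact (Algebra.linearMap k A) g := by
      intro a
      constructor
      · intro ha
        have hin : δ a = a ⊗ₜ (1 : H) := by
          have h0 : δ a - a ⊗ₜ (1 : H) = 0 := by
            simpa [hg, TensorProduct.mk_apply] using ha
          exact sub_eq_zero.mp h0
        have : a ∈ coinv k A H δ := hin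
        rw [hco, Algebra.mem_bot] at this
        obtain ⟨r, hr⟩ := this
        exact ⟨r, by simpa using hr⟩
      · rintro ⟨r, rfl⟩
        have hd : δ (Algebra.linearMap k A r) = (Algebra.linearMap k A r) ⊗ₜ (1 : H) := by
          simp only [Algebra.linearMap_apply, AlgHom.commutes,
            Algebra.TensorProduct.algebraMap_apply]
        simp [hg, hd]
    have hexact2 : Function.Exact (LinearMap.lTensor C (Algebra.linearMap k A))
        (LinearMap.lTensor C g) := Module.Flat.lTensor_exact C hexact
    obtain ⟨y, hy⟩ := (hexact2 x).mp hker
    have hrange : ∀ y : C ⊗[k] k, ∃ c : C,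
        c ⊗ₜ (1 : A) = LinearMap.lTensor C (Algebra.linearMap k A) y := by
      intro y
      induction y using TensorProduct.induction_on with
      | zero => exact ⟨0, by simp [TensorProduct.zero_tmul]⟩
      | add u v hu hv =>
          obtain ⟨cu, hcu⟩ := hu; obtain ⟨cv, hcv⟩ := hv
          exact ⟨cu + cv, by rw [map_add, ← hcu, ← hcv, TensorProduct.add_tmul]⟩
      | tmul u r =>
          refine ⟨r • u, ?_⟩
          simp [Algebra.algebraMap_eq_smul_one, TensorProduct.smul_tmul',
            TensorProduct.tmul_smul]
    obtain ⟨c, hc⟩ := hrange y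
    exact ⟨c, by rw [hc, hy]⟩
  · rintro ⟨c, rfl⟩
    rw [coactT_tmul, map_one, Algebra.TensorProduct.one_def]
    simp

end Lemmas3
end Paper
namespace Paper
section Lemmas4
set_option synthInstance.maxHeartbeats 1000000
set_option maxHeartbeats 4000000
variable (k : Type*) [Field k]
variable (A : Type*) [Ring A] [Algebra k A] (C : Type*) [Ring C] [Algebra k C]
variable (H : Type*) [Ring H] [HopfAlgebra k H]

lemma part_gal (δ : A →ₐ[k] A ⊗[k] H)
    (hgal : Function.Bijective (chi0 k A H δ))
    (ψ : A ⊗[k] C →ₗ[k] C ⊗[k] A) (hψ : IsTwistingMap k A C ψ)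
    (hR : RightNormal k A C ψ) (hL : LeftNormal k A C ψ) :
    ∃ echi : (((C ⊗[k] A) ⊗[k] (C ⊗[k] A)) ⧸
        balSpan (TensorProduct.curry (tmulMap k A C ψ)) (fun c : C => c ⊗ₜ (1 : A)))
          →ₗ[k] (C ⊗[k] A) ⊗[k] H,
      (∀ z, echi ((balSpan (TensorProduct.curry (tmulMap k A C ψ))
          (fun c : C => c ⊗ₜ (1 : A))).mkQ z)
        = chiP (TensorProduct.curry (tmulMap k A C ψ)) (coactT k A C H δ) z)
      ∧ Function.Bijective echi := by
  set m : (C ⊗[k] A) →ₗ[k] (C ⊗[k] A) →ₗ[k] C ⊗[k] A :=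
    TensorProduct.curry (tmulMap k A C ψ) with hmdef
  set e : C → C ⊗[k] A := fun c : C => c ⊗ₜ (1 : A) with hedef
  have hm : ∀ x y : C ⊗[k] A, m x y = tmulMap k A C ψ (x ⊗ₜ y) := fun x y => rfl
  -- right unit
  have G1 : ∀ u : C ⊗[k] A, m u ((1 : C) ⊗ₜ (1 : A)) = u := by
    intro u
    induction u using TensorProduct.induction_on with
    | zero => simp
    | add u v hu hv => rw [map_add, LinearMap.add_apply, hu, hv]
    | tmul c b => rw [hm, tmulMap_tmul, hL]; simp
  -- left multiplication by e c
  have G2 : ∀ (c : C) (y : C ⊗[k] A),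
      m (e c) y = TensorProduct.map (LinearMap.mulLeft k c) LinearMap.id y := by
    intro c y
    induction y using TensorProduct.induction_on with
    | zero => simp
    | add u v hu hv => rw [map_add, hu, hv, map_add]
    | tmul c' a' =>
        rw [hedef, hm, tmulMap_tmul, hR]
        simp [LinearMap.mulLeft_apply, LinearMap.mulRight_apply]
  have G2' : ∀ (c c' : C) (a' : A), m (e c) (c' ⊗ₜ a') = (c * c') ⊗ₜ a' := by
    intro c c' a'; rw [G2]; simp
  have hassoc : ∀ x y z : C ⊗[k] A, m (m x y) z = m x (m y z) := hψ
  -- the `C`-balanced identification (C⊗A)⊗(C⊗A)/bal ≃ (C⊗A)⊗A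
  set eL : C →ₗ[k] C ⊗[k] A := (TensorProduct.mk k C A).flip 1 with heL
  set μ : (C ⊗[k] A) ⊗[k] C →ₗ[k] C ⊗[k] A :=
    tmulMap k A C ψ ∘ₗ LinearMap.lTensor (C ⊗[k] A) eL with hμ
  set f : (C ⊗[k] A) ⊗[k] (C ⊗[k] A) →ₗ[k] (C ⊗[k] A) ⊗[k] A :=
    LinearMap.rTensor A μ ∘ₗ (TensorProduct.assoc k (C ⊗[k] A) C A).symm.toLinearMap with hfd
  have hf : ∀ (u : C ⊗[k] A) (c' : C) (a' : A),
      f (u ⊗ₜ (c' ⊗ₜ a')) = (m u (e c')) ⊗ₜ a' := by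
    intro u c' a'
    simp [hfd, hμ, heL, hm, hedef]
  have hker_f : balSpan m e ≤ LinearMap.ker f := by
    rw [balSpan, Submodule.span_le]
    rintro z ⟨x, y, c, rfl⟩
    simp only [SetLike.mem_coe, LinearMap.mem_ker, map_sub, sub_eq_zero]
    induction y using TensorProduct.induction_on with
    | zero => simp
    | add u v hu hv =>
        simp only [map_add, TensorProduct.tmul_add, TensorProduct.add_tmul, hu, hv]
    | tmul c' a' =>
        rw [hf, G2', hf, hassoc, G2']
  have hker_chi : balSpan m e ≤ LinearMap.ker (chiP m (coactT k A C H δ)) := by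
    rw [balSpan, Submodule.span_le]
    rintro z ⟨x, y, c, rfl⟩
    simp only [SetLike.mem_coe, LinearMap.mem_ker, map_sub, sub_eq_zero]
    induction y using TensorProduct.induction_on with
    | zero => simp
    | add u v hu hv =>
        simp only [map_add, TensorProduct.tmul_add, TensorProduct.add_tmul, hu, hv]
    | tmul c' a' =>
        rw [G2']
        simp only [chiP, LinearMap.comp_apply, LinearEquiv.coe_coe, LinearMap.lTensor_tmul,
          coactT_tmul]
        generalize δ a' = t
        induction t using TensorProduct.induction_on with
        | zero => simp
        | add u v hu hv => simp only [TensorProduct.tmul_add, map_add, hu, hv]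
        | tmul a0 a1 =>
            simp only [LinearEquiv.coe_coe, TensorProduct.assoc_symm_tmul,
              LinearMap.rTensor_tmul]
            rw [TensorProduct.lift.tmul, TensorProduct.lift.tmul]
            rw [hassoc x (e c) (c' ⊗ₜ a0), G2']
  set echi := (balSpan m e).liftQ (chiP m (coactT k A C H δ)) hker_chi with hechi
  refine ⟨echi, fun z => rfl, ?_⟩
  -- the isomorphism with (C⊗A)⊗A
  set g : (C ⊗[k] A) ⊗[k] A →ₗ[k] _ :=
    (balSpan m e).mkQ ∘ₗ LinearMap.lTensor (C ⊗[k] A) ((TensorProduct.mk k C A) 1) with hgd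
  set fbar := (balSpan m e).liftQ f hker_f with hfbar
  have h1 : fbar ∘ₗ g = LinearMap.id := by
    apply TensorProduct.ext'
    intro u a
    simp only [LinearMap.comp_apply, hgd, LinearMap.lTensor_tmul, TensorProduct.mk_apply,
      hfbar, Submodule.mkQ_apply, Submodule.liftQ_apply, LinearMap.id_coe, id_eq]
    rw [hf, show e (1 : C) = (1 : C) ⊗ₜ (1 : A) from rfl, G1]
  have h2 : g ∘ₗ fbar = LinearMap.id := by
    apply Submodule.linearMap_qext
    rw [LinearMap.comp_assoc]
    apply TensorProduct.ext'
    intro u y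
    simp only [LinearMap.comp_apply, hfbar, Submodule.mkQ_apply, Submodule.liftQ_apply,
      LinearMap.id_coe, id_eq]
    induction y using TensorProduct.induction_on with
    | zero => simp
    | add v w hv hw =>
        simp only [map_add, TensorProduct.tmul_add, TensorProduct.add_tmul, hv, hw,
          Submodule.Quotient.mk_add]
    | tmul c' a' =>
        rw [hf]
        simp only [hgd, LinearMap.comp_apply, LinearMap.lTensor_tmul, TensorProduct.mk_apply,
          Submodule.mkQ_apply]
        rw [Submodule.Quotient.eq]
        have hmem : (m u (e c')) ⊗ₜ ((1 : C) ⊗ₜ a') - u ⊗ₜ (m (e c') ((1 : C) ⊗ₜ a'))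
            ∈ balSpan m e := Submodule.subset_span ⟨u, (1 : C) ⊗ₜ a', c', rfl⟩
        rw [G2', mul_one] at hmem
        exact hmem
  -- identification of echi with id_C ⊗ chi0
  set Ξ : (C ⊗[k] A) ⊗[k] A →ₗ[k] (C ⊗[k] A) ⊗[k] H :=
    (TensorProduct.assoc k C A H).symm.toLinearMap
      ∘ₗ LinearMap.lTensor C (chi0 k A H δ)
      ∘ₗ (TensorProduct.assoc k C A A).toLinearMap with hXd
  have hXg : echi ∘ₗ g = Ξ := by
    apply TensorProduct.ext'
    intro u a
    induction u using TensorProduct.induction_on with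
    | zero => simp [TensorProduct.zero_tmul]
    | add u v hu hv => rw [TensorProduct.add_tmul, map_add, map_add, hu, hv]
    | tmul c b =>
        simp only [LinearMap.comp_apply, hgd, LinearMap.lTensor_tmul, TensorProduct.mk_apply,
          hechi, Submodule.mkQ_apply, Submodule.liftQ_apply, hXd, LinearEquiv.coe_coe,
          TensorProduct.assoc_tmul]
        simp only [chiP, LinearMap.comp_apply, LinearEquiv.coe_coe, LinearMap.lTensor_tmul,
          coactT_tmul, chi0, AlgHom.toLinearMap_apply]
        generalize δ a = t
        induction t using TensorProduct.induction_on with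
        | zero => simp
        | add u v hu hv => simp only [TensorProduct.tmul_add, map_add, hu, hv]
        | tmul a0 a1 =>
            simp only [LinearEquiv.coe_coe, TensorProduct.assoc_symm_tmul,
              LinearMap.rTensor_tmul, LinearMap.lTensor_tmul]
            rw [TensorProduct.lift.tmul, hm, tmulMap_tmul, hL]
            simp [LinearMap.mul'_apply]
  have hcongr : LinearMap.lTensor C (chi0 k A H δ)
      = (TensorProduct.congr (LinearEquiv.refl k C)
          (LinearEquiv.ofBijective (chi0 k A H δ) hgal)).toLinearMap := by
    apply TensorProduct.ext'
    intro c w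
    simp [TensorProduct.congr_tmul]
  have hXi : Function.Bijective Ξ := by
    rw [hXd]
    simp only [LinearMap.coe_comp, LinearEquiv.coe_coe]
    refine Function.Bijective.comp ?_ (Function.Bijective.comp ?_ ?_)
    · exact (TensorProduct.assoc k C A H).symm.bijective
    · rw [hcongr]
      exact (TensorProduct.congr (LinearEquiv.refl k C)
        (LinearEquiv.ofBijective (chi0 k A H δ) hgal)).bijective
    · exact (TensorProduct.assoc k C A A).bijective
  have heq : echi = Ξ ∘ₗ fbar := by
    conv_lhs => rw [← LinearMap.comp_id echi, ← h2, ← LinearMap.comp_assoc, hXg]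
  rw [heq]
  have hfbar_bij : Function.Bijective ⇑fbar :=
    Function.bijective_iff_has_inverse.mpr
      ⟨g, fun x => LinearMap.congr_fun h2 x, fun x => LinearMap.congr_fun h1 x⟩
  have hcoe : ⇑(Ξ ∘ₗ fbar) = ⇑Ξ ∘ ⇑fbar := LinearMap.coe_comp _ _
  rw [hcoe]
  exact hXi.comp hfbar_bij
end Lemmas4
end Paper
namespace Paper
section Lemmas5
set_option synthInstance.maxHeartbeats 1000000
set_option maxHeartbeats 4000000
variable (k : Type*) [Field k]
variable (A : Type*) [Ring A] [Algebra k A] (C : Type*) [Ring C] [Algebra k C]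

lemma part_flat (hff : Module.FaithfullyFlat k A) :
    IsFaithfullyFlatLeft C (C ⊗[k] A) := by
  classical
  set b := Module.Basis.ofVectorSpace k A with hb
  set φ : Module.Basis.ofVectorSpaceIndex k A → (C ⊗[k] A →ₗ[k] C) :=
    fun i => (TensorProduct.rid k C).toLinearMap ∘ₗ LinearMap.lTensor C (b.coord i) with hφ
  have hφ_tmul : ∀ i (c : C) (a : A), φ i (c ⊗ₜ a) = b.repr a i • c := by
    intro i c a
    simp [hφ, Module.Basis.coord_apply, TensorProduct.rid_tmul]
  have Psmul : ∀ i (c : C) (v : C ⊗[k] A), φ i (c • v) = c * φ i v := by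
    intro i c v
    induction v using TensorProduct.induction_on with
    | zero => rw [smul_zero, map_zero, mul_zero]
    | add u w hu hw => rw [smul_add, map_add, map_add, mul_add, hu, hw]
    | tmul c' a =>
        rw [TensorProduct.smul_tmul', hφ_tmul, hφ_tmul, smul_eq_mul, mul_smul_comm]
  have Prep : ∀ v : C ⊗[k] A, ∃ S : Finset (Module.Basis.ofVectorSpaceIndex k A),
      ∀ T : Finset (Module.Basis.ofVectorSpaceIndex k A), S ⊆ T →
        v = ∑ i ∈ T, φ i v • ((1 : C) ⊗ₜ[k] (b i : A)) := by
    intro v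
    induction v using TensorProduct.induction_on with
    | zero => exact ⟨∅, fun T _ => by simp⟩
    | add u w hu hw =>
        obtain ⟨Su, hSu⟩ := hu; obtain ⟨Sw, hSw⟩ := hw
        refine ⟨Su ∪ Sw, fun T hT => ?_⟩
        have h1 := hSu T (Finset.union_subset_iff.mp hT).1
        have h2 := hSw T (Finset.union_subset_iff.mp hT).2
        calc u + w = ∑ i ∈ T, φ i u • ((1 : C) ⊗ₜ[k] (b i : A))
              + ∑ i ∈ T, φ i w • ((1 : C) ⊗ₜ[k] (b i : A)) := by rw [← h1, ← h2]
          _ = ∑ i ∈ T, (φ i u • ((1 : C) ⊗ₜ[k] (b i : A))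
              + φ i w • ((1 : C) ⊗ₜ[k] (b i : A))) := by rw [Finset.sum_add_distrib]
          _ = ∑ i ∈ T, φ i (u + w) • ((1 : C) ⊗ₜ[k] (b i : A)) := by
              refine Finset.sum_congr rfl fun i _ => ?_
              rw [map_add, add_smul]
    | tmul c a =>
        refine ⟨(b.repr a).support, fun T hT => ?_⟩
        have hterm : ∀ i, φ i (c ⊗ₜ[k] a) • ((1 : C) ⊗ₜ[k] (b i : A))
            = c ⊗ₜ[k] (b.repr a i • (b i : A)) := by
          intro i
          rw [hφ_tmul, TensorProduct.smul_tmul', smul_eq_mul, mul_one,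
            TensorProduct.smul_tmul]
        rw [Finset.sum_congr rfl fun i _ => hterm i, ← TensorProduct.tmul_sum]
        congr 1
        rw [← Finset.sum_subset hT (fun i _ hi => by
          rw [Finsupp.notMem_support_iff.mp hi, zero_smul])]
        conv_lhs => rw [← b.linearCombination_repr a]
        rw [Finsupp.linearCombination_apply]
        rfl
  constructor
  · -- flatness
    intro n r x hrel
    choose S hS using fun i => Prep (x i)
    set T : Finset (Module.Basis.ofVectorSpaceIndex k A) := Finset.univ.biUnion S with hT
    have hsub : ∀ i, S i ⊆ T := fun i => Finset.subset_biUnion_of_mem S (Finset.mem_univ i)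
    set σ := T.equivFin with hσ
    refine ⟨T.card, fun i j => φ (σ.symm j : Module.Basis.ofVectorSpaceIndex k A) (x i),
      fun j => (1 : C) ⊗ₜ[k] (b (σ.symm j : Module.Basis.ofVectorSpaceIndex k A) : A), ?_, ?_⟩
    · intro i
      rw [hS i T (hsub i)]
      rw [← Finset.sum_coe_sort T
        (fun p => φ p (x i) • ((1 : C) ⊗ₜ[k] (b p : A)))]
      exact (Equiv.sum_comp σ.symm
        (fun p : T => φ (p : Module.Basis.ofVectorSpaceIndex k A) (x i)
          • ((1 : C) ⊗ₜ[k] (b (p : Module.Basis.ofVectorSpaceIndex k A) : A)))).symm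
    · intro j
      have hsum : ∑ i, r i * φ (σ.symm j : Module.Basis.ofVectorSpaceIndex k A) (x i)
          = φ (σ.symm j : Module.Basis.ofVectorSpaceIndex k A) (∑ i, r i • x i) := by
        rw [map_sum]
        exact Finset.sum_congr rfl fun i _ => (Psmul _ _ _).symm
      rw [hsum, hrel, map_zero]
  · -- faithfulness
    intro I hI hTop
    have hA : Nontrivial A := by
      by_contra h
      have hsub : Subsingleton A := not_nontrivial_iff_subsingleton.mp h
      exact hff.submodule_ne_top Ideal.bot_isMaximal (Subsingleton.elim _ _)
    obtain ⟨i0⟩ := b.index_nonempty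
    have hmem : ∀ z ∈ AddSubgroup.closure {z : C ⊗[k] A | ∃ i ∈ I, ∃ v, z = i • v},
        φ i0 z ∈ I := by
      intro z hz
      refine AddSubgroup.closure_induction (fun w hw => ?_) (by simp)
        (fun a' b' _ _ ha hb => by rw [map_add]; exact I.add_mem ha hb)
        (fun a' _ ha => by rw [map_neg]; exact neg_mem ha) hz
      obtain ⟨i, hi, v, rfl⟩ := hw
      rw [Psmul]
      rw [show i * φ i0 v = MulOpposite.op (φ i0 v) • i from rfl]
      exact I.smul_mem _ hi
    have h1 : φ i0 ((1 : C) ⊗ₜ[k] (b i0 : A)) = 1 := by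
      rw [hφ_tmul, Module.Basis.repr_self, Finsupp.single_eq_same, one_smul]
    have hone : (1 : C) ∈ I := by
      have := hmem ((1 : C) ⊗ₜ[k] (b i0 : A)) (by rw [hTop]; exact AddSubgroup.mem_top _)
      rwa [h1] at this
    have : I = ⊤ := by
      rw [Submodule.eq_top_iff']
      intro c
      have := I.smul_mem (MulOpposite.op c) hone
      rwa [op_smul_eq_mul, one_mul] at this
    exact hI.1 this
end Lemmas5
end Paper
open Paper in
/-- if `A` is a faithfully flat `H`-Galois object and `ψ` is a normal twisting
map which is an `H`-comodule morphism, then `C ⊗^ψ A` is a right `H`-comodule algebra with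
coinvariants `C ⊗ 1`, and `C ⊆ C ⊗^ψ A` is a faithfully flat `H`-Galois extension. -/
theorem galoisObject_pushforward
    (k : Type*) [Field k] (A : Type*) [Ring A] [Algebra k A]
    (C : Type*) [Ring C] [Algebra k C] (H : Type*) [Ring H] [HopfAlgebra k H]
    (δ : A →ₐ[k] A ⊗[k] H) (hδ : IsComodAlg k A H δ)
    -- `A` is an `H`-Galois object (`A^{co H} = k` and the canonical map is bijective):
    (hco : coinv k A H δ = ⊥)
    (hgal : Function.Bijective (chi0 k A H δ))
    -- `A` is faithfully flat as a `k`-module: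
    (hff : Module.FaithfullyFlat k A)
    (ψ : A ⊗[k] C →ₗ[k] C ⊗[k] A) (hψ : IsTwistingMap k A C ψ)
    (hR : RightNormal k A C ψ) (hL : LeftNormal k A C ψ)
    (hcomod : IsComodMor k A C H δ ψ) :
    -- `C ⊗^ψ A` is a right `H`-comodule algebra with coaction `id_C ⊗ δ`:
    ((∀ x y : C ⊗[k] A,
        coactT k A C H δ (tmul k A C ψ x y)
          = tmulH (TensorProduct.curry (tmulMap k A C ψ))
              (coactT k A C H δ x) (coactT k A C H δ y))
      ∧ coactT k A C H δ ((1 : C) ⊗ₜ (1 : A)) = ((1 : C) ⊗ₜ (1 : A)) ⊗ₜ (1 : H)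
      ∧ Coassoc (coactT k A C H δ) ∧ Counital (coactT k A C H δ))
    -- whose coinvariant subalgebra is `C ⊗ 1_A ≅ C`:
    ∧ {x : C ⊗[k] A | coactT k A C H δ x = x ⊗ₜ (1 : H)}
        = Set.range (fun c : C => c ⊗ₜ (1 : A))
    -- and `C ⊆ C ⊗^ψ A` is an `H`-Galois extension:
    ∧ (∃ echi : (((C ⊗[k] A) ⊗[k] (C ⊗[k] A)) ⧸
          balSpan (TensorProduct.curry (tmulMap k A C ψ)) (fun c : C => c ⊗ₜ (1 : A)))
            →ₗ[k] (C ⊗[k] A) ⊗[k] H,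
        (∀ z, echi ((balSpan (TensorProduct.curry (tmulMap k A C ψ))
            (fun c : C => c ⊗ₜ (1 : A))).mkQ z)
          = chiP (TensorProduct.curry (tmulMap k A C ψ)) (coactT k A C H δ) z)
        ∧ Function.Bijective echi)
    -- which is faithfully flat as a left `C`-module:
    ∧ IsFaithfullyFlatLeft C (C ⊗[k] A) := by
  exact ⟨⟨fun x y => part_a k A C H δ ψ hcomod x y, part_b k A C H δ,
    part_c k A C H δ hδ, part_d k A C H δ hδ⟩,
    part_coinv k A C H δ hco,
    part_gal k A C H δ hgal ψ hψ hR hL,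
    part_flat k A C hff⟩
end
end

section
/- Let H be a Hopf algebra over k, A a right H-comodule algebra with coinvariant subalgebra B = A^{coH}, and let I = ⟨y₁,…,y_m⟩ be the two-sided ideal of B generated by elements y₁,…,y_m ∈ B, with C := B/I and π: B → C the quotient map; assume A·I ⊆ I·A. Let I_A be the two-sided ideal of A generated by y₁,…,y_m. Then the map g: C⊗^ψ_BA → A/I_A, [b]⊗_Ba ↦ [ba], is a well-defined isomorphism of right H-comodule algebras, where C⊗^ψ_BA is the push-forward C⊗_BA endowed with the product ([b]⊗_Ba)·([b']⊗_Ba') = 1_C⊗_B bab'a' and coaction id_C⊗_Bδ, and A/I_A carries the induced H-comodule algebra structure. -/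
open TensorProduct LinearMap Function

noncomputable section
set_option maxHeartbeats 3200000 in
set_option synthInstance.maxHeartbeats 400000 in
open Paper in
/-- for `C = B/I` with `I = ⟨y₁,…,y_m⟩ ⊆ B` satisfying `A·I ⊆ I·A`, and `I_A`
the two-sided ideal of `A` generated by the `y_i`, the map `g : C ⊗^ψ_B A → A/I_A`,
`[b] ⊗_B a ↦ [ba]`, is a well-defined isomorphism of right `H`-comodule algebras. -/
theorem pushforward_to_quotient_algebra
    (k : Type*) [Field k] (A : Type*) [Ring A] [Algebra k A]
    (C : Type*) [Ring C] [Algebra k C] (H : Type*) [Ring H] [HopfAlgebra k H]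
    (δ : A →ₐ[k] A ⊗[k] H) (hδ : IsComodAlg k A H δ)
    -- the generators `y i` of the ideal, lying in `B = A^{co H}`:
    (n : ℕ) (y : Fin n → A) (hy : ∀ i, y i ∈ coinv k A H δ)
    -- `A·I ⊆ I·A`, where `I` is the two-sided ideal of `B` generated by the `y i`:
    (hAI : ∀ (a z : A),
      z ∈ Submodule.span k {w : A | ∃ (i : Fin n) (u v : coinv k A H δ),
            w = (u : A) * y i * (v : A)} →
      a * z ∈ Submodule.span k {w : A | ∃ (zz aa : A),
            zz ∈ Submodule.span k {w' : A | ∃ (i : Fin n) (u v : coinv k A H δ),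
              w' = (u : A) * y i * (v : A)} ∧ w = zz * aa})
    -- `C = B/I` with quotient map `F = π`:
    (F : coinv k A H δ →ₐ[k] C) (hFsurj : Function.Surjective F)
    (hFker : ∀ b : coinv k A H δ,
      F b = 0 ↔ (b : A) ∈ Submodule.span k {w : A | ∃ (i : Fin n) (u v : coinv k A H δ),
        w = (u : A) * y i * (v : A)})
    -- `QA = A/I_A` with quotient map `pA`, where `I_A` is the two-sided ideal of `A`
    -- generated by the `y i`:
    (QA : Type*) [Ring QA] [Algebra k QA]
    (pA : A →ₐ[k] QA) (hpAsurj : Function.Surjective pA)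
    (hpAker : ∀ a : A,
      pA a = 0 ↔ a ∈ Submodule.span k {w : A | ∃ (i : Fin n) (u v : A), w = u * y i * v})
    -- the product `([b] ⊗_B a)·([b'] ⊗_B a') = 1 ⊗_B b a b' a'` on `C ⊗_B A`:
    (m : ((C ⊗[k] A) ⧸ pushSpan k A C H δ F) →ₗ[k]
      ((C ⊗[k] A) ⧸ pushSpan k A C H δ F) →ₗ[k] ((C ⊗[k] A) ⧸ pushSpan k A C H δ F))
    (hm : ∀ (b b' : coinv k A H δ) (a a' : A),
      m (pushQ k A C H δ F (F b ⊗ₜ a)) (pushQ k A C H δ F (F b' ⊗ₜ a'))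
        = pushQ k A C H δ F ((1 : C) ⊗ₜ ((b : A) * a * (b' : A) * a')))
    -- the coaction `id_C ⊗_B δ` on `C ⊗_B A`:
    (db : ((C ⊗[k] A) ⧸ pushSpan k A C H δ F) →ₗ[k]
      ((C ⊗[k] A) ⧸ pushSpan k A C H δ F) ⊗[k] H)
    (hdb : ∀ x : C ⊗[k] A,
      db (pushQ k A C H δ F x) = rTensor H (pushQ k A C H δ F) (coactT k A C H δ x))
    -- the induced coaction on `A/I_A`:
    (δQ : QA →ₗ[k] QA ⊗[k] H)
    (hδQ : ∀ a : A, δQ (pA a) = rTensor H pA.toLinearMap (δ a)) :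
    -- `g : [b] ⊗_B a ↦ [b a]` is a well-defined isomorphism of `H`-comodule algebras:
    ∃ g : ((C ⊗[k] A) ⧸ pushSpan k A C H δ F) ≃ₗ[k] QA,
      (∀ (b : coinv k A H δ) (a : A),
        g (pushQ k A C H δ F (F b ⊗ₜ a)) = pA ((b : A) * a))
      ∧ (∀ p q, g (m p q) = g p * g q)
      ∧ g (pushQ k A C H δ F ((1 : C) ⊗ₜ (1 : A))) = 1
      ∧ (∀ p, δQ (g p) = rTensor H g.toLinearMap (db p)) := by
    classical
  set Ispan : Submodule k A := Submodule.span k {w : A | ∃ (i : Fin n) (u v : coinv k A H δ),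
      w = (u : A) * y i * (v : A)} with hIspan
  set Kspan : Submodule k A := Submodule.span k {w : A | ∃ (i : Fin n) (u v : A),
      w = u * y i * v} with hKspan
  have hIK : Ispan ≤ Kspan := by
    rw [hIspan, hKspan]
    apply Submodule.span_le.mpr
    rintro w ⟨i, u, v, rfl⟩
    exact Submodule.subset_span ⟨i, u, v, rfl⟩
  have hpAI : ∀ b : coinv k A H δ, F b = 0 → pA (b : A) = 0 := fun b hb =>
    (hpAker _).mpr (hIK ((hFker b).mp hb))
  have hfw : ∀ b b' : coinv k A H δ, F b = F b' → pA (b : A) = pA (b' : A) := by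
    intro b b' h
    have h0 : F (b - b') = 0 := by rw [map_sub, h, sub_self]
    have h1 := hpAI _ h0
    push_cast at h1
    rw [map_sub, sub_eq_zero] at h1
    exact h1
  set f0 : C → QA := fun c => pA ((Function.surjInv hFsurj c : coinv k A H δ) : A) with hf0def
  have hf0 : ∀ b : coinv k A H δ, f0 (F b) = pA (b : A) := fun b =>
    hfw _ _ (Function.surjInv_eq hFsurj (F b))
  set flin : C →ₗ[k] QA :=
    { toFun := f0
      map_add' := by
        intro c c'
        obtain ⟨b, rfl⟩ := hFsurj c
        obtain ⟨b', rfl⟩ := hFsurj c'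
        rw [← map_add, hf0, hf0, hf0]
        push_cast
        rw [map_add]
      map_smul' := by
        intro r c
        obtain ⟨b, rfl⟩ := hFsurj c
        rw [← map_smul, hf0, hf0]
        push_cast
        rw [map_smul]
        rfl } with hflin
  have hflinF : ∀ b : coinv k A H δ, flin (F b) = pA (b : A) := fun b => hf0 b
  set φbil : C →ₗ[k] A →ₗ[k] QA := ((LinearMap.mul k QA) ∘ₗ flin).compl₂ pA.toLinearMap
    with hφbil
  set φ : C ⊗[k] A →ₗ[k] QA := TensorProduct.lift φbil with hφ
  have hφtmul : ∀ (c : C) (a : A), φ (c ⊗ₜ a) = flin c * pA a := fun c a => rfl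
  have hmulF : ∀ (c : C) (b : coinv k A H δ), flin (c * F b) = flin c * pA (b : A) := by
    intro c b
    obtain ⟨b'', rfl⟩ := hFsurj c
    rw [← map_mul, hflinF, hflinF]
    push_cast
    rw [map_mul]
  have hkerφ : pushSpan k A C H δ F ≤ LinearMap.ker φ := by
    rw [pushSpan, relSpan]
    apply Submodule.span_le.mpr
    rintro x ⟨c, b, a, rfl⟩
    simp only [SetLike.mem_coe, LinearMap.mem_ker, map_sub]
    rw [hφtmul, hφtmul, hmulF, map_mul, mul_assoc, sub_self]
  set gbar : ((C ⊗[k] A) ⧸ pushSpan k A C H δ F) →ₗ[k] QA :=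
    (pushSpan k A C H δ F).liftQ φ hkerφ with hgbardef
  have hgbar : ∀ x : C ⊗[k] A, gbar (pushQ k A C H δ F x) = φ x := fun x => rfl
  have hrel : ∀ (c : C) (b : coinv k A H δ) (a : A),
      pushQ k A C H δ F (c ⊗ₜ ((b : A) * a)) = pushQ k A C H δ F ((c * F b) ⊗ₜ a) := by
    intro c b a
    rw [← sub_eq_zero, ← map_sub]
    show Submodule.Quotient.mk _ = (0 : _)
    rw [Submodule.Quotient.mk_eq_zero]
    exact Submodule.subset_span ⟨c, b, a, rfl⟩
  have hFy : ∀ i, F ⟨y i, hy i⟩ = 0 := fun i =>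
    (hFker _).mpr (Submodule.subset_span ⟨i, 1, 1, by simp⟩)
  have hpush1 : ∀ z ∈ Ispan, ∀ w : A, pushQ k A C H δ F ((1:C) ⊗ₜ (z * w)) = 0 := by
    intro z hz
    induction hz using Submodule.span_induction with
    | mem x hx =>
      obtain ⟨i, u, v, rfl⟩ := hx
      intro w
      have h1 : ((u : A) * y i * (v : A)) * w
          = (u : A) * (((⟨y i, hy i⟩ : coinv k A H δ) : A) * ((v : A) * w)) := by
        simp [mul_assoc]
      rw [h1, hrel, hrel, hFy, mul_zero, TensorProduct.zero_tmul, map_zero]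
    | zero => intro w; rw [zero_mul, TensorProduct.tmul_zero, map_zero]
    | add x x' hx hx' ihx ihx' =>
      intro w
      rw [add_mul, TensorProduct.tmul_add, map_add, ihx, ihx', add_zero]
    | smul r x hx ih =>
      intro w
      rw [smul_mul_assoc, TensorProduct.tmul_smul, map_smul, ih, smul_zero]
  have hLK : ∀ a ∈ Kspan, pushQ k A C H δ F ((1:C) ⊗ₜ a) = 0 := by
    have key : ∀ t ∈ Submodule.span k {w : A | ∃ zz aa, zz ∈ Ispan ∧ w = zz * aa},
        ∀ v : A, pushQ k A C H δ F ((1:C) ⊗ₜ (t * v)) = 0 := by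
      intro t ht
      induction ht using Submodule.span_induction with
      | mem x hx =>
        obtain ⟨zz, aa, hzz, rfl⟩ := hx
        intro v
        rw [mul_assoc]
        exact hpush1 zz hzz (aa * v)
      | zero => intro v; rw [zero_mul, TensorProduct.tmul_zero, map_zero]
      | add x x' hx hx' ihx ihx' =>
        intro v
        rw [add_mul, TensorProduct.tmul_add, map_add, ihx, ihx', add_zero]
      | smul r x hx ih =>
        intro v
        rw [smul_mul_assoc, TensorProduct.tmul_smul, map_smul, ih, smul_zero]
    intro a ha
    induction ha using Submodule.span_induction with
    | mem x hx =>
      obtain ⟨i, u, v, rfl⟩ := hx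
      have hyI : y i ∈ Ispan := by
        rw [hIspan]; exact Submodule.subset_span ⟨i, 1, 1, by simp⟩
      exact key _ (hAI u (y i) hyI) v
    | zero => rw [TensorProduct.tmul_zero, map_zero]
    | add x x' hx hx' ihx ihx' => rw [TensorProduct.tmul_add, map_add, ihx, ihx', add_zero]
    | smul r x hx ih => rw [TensorProduct.tmul_smul, map_smul, ih, smul_zero]
  set L : A →ₗ[k] ((C ⊗[k] A) ⧸ pushSpan k A C H δ F) :=
    pushQ k A C H δ F ∘ₗ (TensorProduct.mk k C A 1) with hLdef
  have hLa : ∀ a : A, L a = pushQ k A C H δ F ((1:C) ⊗ₜ a) := fun a => rfl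
  have hLwell : ∀ a a' : A, pA a = pA a' → L a = L a' := by
    intro a a' h
    have h0 : pA (a - a') = 0 := by rw [map_sub, h, sub_self]
    have h1 := hLK _ ((hpAker _).mp h0)
    rw [TensorProduct.tmul_sub, map_sub, sub_eq_zero] at h1
    rw [hLa, hLa, h1]
  set h0fun : QA → ((C ⊗[k] A) ⧸ pushSpan k A C H δ F) :=
    fun q => L (Function.surjInv hpAsurj q) with hh0def
  have hh0 : ∀ a : A, h0fun (pA a) = L a := fun a =>
    hLwell _ _ (Function.surjInv_eq hpAsurj (pA a))
  set hlin : QA →ₗ[k] ((C ⊗[k] A) ⧸ pushSpan k A C H δ F) :=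
    { toFun := h0fun
      map_add' := by
        intro q q'
        obtain ⟨a, rfl⟩ := hpAsurj q
        obtain ⟨a', rfl⟩ := hpAsurj q'
        rw [← map_add, hh0, hh0, hh0, map_add]
      map_smul' := by
        intro r q
        obtain ⟨a, rfl⟩ := hpAsurj q
        rw [← map_smul, hh0, hh0, map_smul]
        rfl } with hhlin
  have hhlinpA : ∀ a : A, hlin (pA a) = L a := fun a => hh0 a
  clear_value f0 flin φbil φ gbar L h0fun hlin
  have hflin1 : flin 1 = 1 := by
    have h1 : (1 : C) = F 1 := (map_one F).symm
    rw [h1, hflinF, OneMemClass.coe_one, map_one]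
  have hgL : ∀ a : A, gbar (L a) = pA a := by
    intro a
    rw [hLa, hgbar, hφtmul, hflin1, one_mul]
  have hgh : ∀ q : QA, gbar (hlin q) = q := by
    intro q
    obtain ⟨a, rfl⟩ := hpAsurj q
    rw [hhlinpA, hgL]
  have hsurjQ : Function.Surjective (pushQ k A C H δ F) :=
    Submodule.mkQ_surjective _
  have hhg : ∀ p, hlin (gbar p) = p := by
    intro p
    obtain ⟨x, rfl⟩ := hsurjQ p
    rw [hgbar]
    induction x using TensorProduct.induction_on with
    | zero => rw [map_zero, map_zero, map_zero]
    | tmul c a =>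
      obtain ⟨b, rfl⟩ := hFsurj c
      rw [hφtmul, hflinF, ← map_mul, hhlinpA, hLa, hrel, one_mul]
    | add x x' ihx ihx' => rw [map_add, map_add, ihx, ihx', map_add]
  refine ⟨LinearEquiv.ofLinear gbar hlin (LinearMap.ext hgh) (LinearMap.ext hhg),
    ?_, ?_, ?_, ?_⟩
  · intro b a
    rw [LinearEquiv.ofLinear_apply, hgbar, hφtmul, hflinF, map_mul]
  · have hmul : ∀ x x' : C ⊗[k] A,
        gbar (m (pushQ k A C H δ F x) (pushQ k A C H δ F x'))
          = gbar (pushQ k A C H δ F x) * gbar (pushQ k A C H δ F x') := by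
      intro x x'
      induction x using TensorProduct.induction_on with
      | zero => rw [map_zero, map_zero, LinearMap.zero_apply, map_zero, zero_mul]
      | tmul c a =>
        obtain ⟨b, rfl⟩ := hFsurj c
        induction x' using TensorProduct.induction_on with
        | zero => rw [map_zero, map_zero, map_zero, mul_zero]
        | tmul c' a' =>
          obtain ⟨b', rfl⟩ := hFsurj c'
          rw [hm b b' a a', hgbar, hφtmul, hflin1, one_mul,
            hgbar, hφtmul, hflinF, hgbar, hφtmul, hflinF]
          simp only [map_mul, mul_assoc]
        | add u v ihu ihv =>
          simp only [map_add, ihu, ihv, mul_add]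
      | add u v ihu ihv =>
        simp only [map_add, LinearMap.add_apply, ihu, ihv, add_mul]
    intro p q
    obtain ⟨x, rfl⟩ := hsurjQ p
    obtain ⟨x', rfl⟩ := hsurjQ q
    simpa only [LinearEquiv.ofLinear_apply] using hmul x x'
  · rw [LinearEquiv.ofLinear_apply, hgbar, hφtmul, hflin1, one_mul, map_one]
  · have hco : ∀ b : coinv k A H δ, δ ((b : A)) = (b : A) ⊗ₜ (1:H) := fun b => b.2
    have hcomod : ∀ x : C ⊗[k] A,
        δQ (gbar (pushQ k A C H δ F x))
          = rTensor H gbar (rTensor H (pushQ k A C H δ F) (coactT k A C H δ x)) := by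
      intro x
      induction x using TensorProduct.induction_on with
      | zero => simp only [map_zero]
      | tmul c a =>
        obtain ⟨b, rfl⟩ := hFsurj c
        rw [hgbar, hφtmul, hflinF, ← map_mul, hδQ]
        have hcoact : coactT k A C H δ (F b ⊗ₜ a)
            = (TensorProduct.assoc k C A H).symm (F b ⊗ₜ (δ a)) := by
          simp [coactT]
        rw [hcoact, map_mul, hco b]
        have claim : ∀ t : A ⊗[k] H,
            rTensor H pA.toLinearMap (((b : A) ⊗ₜ (1:H)) * t)
              = rTensor H gbar (rTensor H (pushQ k A C H δ F)
                  ((TensorProduct.assoc k C A H).symm (F b ⊗ₜ t))) := by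
          intro t
          induction t using TensorProduct.induction_on with
          | zero => simp only [mul_zero, TensorProduct.tmul_zero, map_zero]
          | tmul a0 h =>
            rw [Algebra.TensorProduct.tmul_mul_tmul, one_mul,
              TensorProduct.assoc_symm_tmul, rTensor_tmul, rTensor_tmul, rTensor_tmul,
              hgbar, hφtmul, hflinF]
            rw [show pA.toLinearMap ((b : A) * a0) = pA ((b : A) * a0) from rfl, map_mul]
          | add u v ihu ihv =>
            rw [mul_add, TensorProduct.tmul_add, map_add, map_add, map_add, map_add, ihu, ihv]
        exact claim (δ a)
      | add u v ihu ihv =>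
        simp only [map_add, ihu, ihv]
    intro p
    obtain ⟨x, rfl⟩ := hsurjQ p
    rw [LinearEquiv.ofLinear_apply, LinearEquiv.ofLinear_toLinearMap, hdb]
    exact hcomod x
end
end
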